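/- arXiv:math/0303162 — 2 statements merged into one kernel-verified Lean document; each statement's English description precedes it below -/
import Mathlib

section
/- Let B be an indefinite quaternion algebra over ℚ that is not isomorphic to (-1,-1/ℚ). Then B*/ℚ* contains no subgroup isomorphic to A₄, S₄ or A₅. In particular, for B indefinite, B*/ℚ* never contains A₄, S₄ or A₅. -/
/-!
A subgroup `A₄`, `S₄` or `A₅` of `B*/ℚ*` contains a Klein four-group `{1, x, y, xy}` together
with an element `w` whose conjugation permutes `x ↦ y ↦ xy`. Lift `x, y` to units `u, v` of `B`.
A non-central unit with central square is a pure quaternion, and the product of two pure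
quaternions is pure only if they anticommute; so `uv = -vu` and `(uv)² = -u²v²`. Conjugation
by `w` carries `u, v` to scalar multiples of `v, uv`, so `u²`, `v²` and `-u²v²` lie in one square
class of `ℚ*`, which forces `u²` and `v²` to be `-1` up to squares. Rescaled, `u, v` satisfy the
relations `P² = Q² = -1`, `PQ = -QP` of Hamilton's quaternions, and such a pair cannot exist in
`B ⊗ ℝ ≅ M₂(ℝ)`.
-/

open scoped Quaternion

def IsHamiltonPair {A : Type*} [Ring A] (P Q : A) : Prop :=
  P * P = -1 ∧ Q * Q = -1 ∧ P * Q = -(Q * P)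

theorem IsHamiltonPair.map {A B F : Type*} [Ring A] [Ring B] [FunLike F A B]
    [RingHomClass F A B] (f : F) {P Q : A} (h : IsHamiltonPair P Q) :
    IsHamiltonPair (f P) (f Q) := by
  obtain ⟨hP, hQ, hPQ⟩ := h
  exact ⟨by rw [← map_mul, hP, map_neg, map_one], by rw [← map_mul, hQ, map_neg, map_one],
    by rw [← map_mul, hPQ, map_neg, map_mul]⟩

theorem isHamiltonPair_smul {K A : Type*} [CommRing K] [Ring A] [Algebra K A] {p q : A}
    {s t : K} (hp : s ^ 2 • (p * p) = -1) (hq : t ^ 2 • (q * q) = -1)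
    (hpq : p * q = -(q * p)) : IsHamiltonPair (s • p) (t • q) := by
  refine ⟨?_, ?_, ?_⟩
  · rw [smul_mul_smul_comm, ← sq, hp]
  · rw [smul_mul_smul_comm, ← sq, hq]
  · rw [smul_mul_smul_comm, smul_mul_smul_comm, hpq, smul_neg, mul_comm]

theorem Matrix.not_isHamiltonPair {L : Type*} [Field L] [LinearOrder L] [IsStrictOrderedRing L]
    (M N : Matrix (Fin 2) (Fin 2) L) : ¬IsHamiltonPair M N := by
  rintro ⟨hM, hN, hMN⟩
  have e1 := congrFun (congrFun hM 0) 0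
  have e2 := congrFun (congrFun hN 0) 0
  have e3 := congrFun (congrFun hMN 0) 0
  simp only [mul_apply, Fin.sum_univ_two, neg_apply, one_apply_eq] at e1 e2 e3
  have key : (M 0 1 * N 1 0 - N 0 1 * M 1 0) ^ 2 + 4 * (1 + M 0 0 ^ 2 + N 0 0 ^ 2) = 0 := by
    linear_combination (M 0 1 * N 1 0 + N 0 1 * M 1 0 - 2 * M 0 0 * N 0 0) * e3
      - 4 * N 0 1 * N 1 0 * e1 + 4 * (M 0 0 ^ 2 + 1) * e2
  nlinarith [sq_nonneg (M 0 1 * N 1 0 - N 0 1 * M 1 0), sq_nonneg (M 0 0), sq_nonneg (N 0 0)]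

theorem mul_self_eq_of_conj_eq_central_mul {G : Type*} [Group G] {u v w ζ : G}
    (hu : u * u ∈ Subgroup.center G) (hζ : ζ ∈ Subgroup.center G) (h : w * u * w⁻¹ = ζ * v) :
    u * u = ζ * ζ * (v * v) := by
  rw [Subgroup.mem_center_iff] at hu hζ
  calc u * u = w * (u * u) * w⁻¹ := by rw [hu w]; group
    _ = (w * u * w⁻¹) * (w * u * w⁻¹) := by group
    _ = ζ * ζ * (v * v) := by rw [h, ← mul_assoc, mul_assoc ζ v ζ, hζ v]; group

structure IsKleinFourCycle {G : Type*} [Group G] (x y w : G) : Prop where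
  x_ne_one : x ≠ 1
  y_ne_one : y ≠ 1
  mul_ne_one : x * y ≠ 1
  x_mul_self : x * x = 1
  y_mul_self : y * y = 1
  mul_mul_self : x * y * (x * y) = 1
  conj_x : w * x * w⁻¹ = y
  conj_y : w * y * w⁻¹ = x * y

theorem IsKleinFourCycle.map {G H : Type*} [Group G] [Group H] {x y w : G}
    (h : IsKleinFourCycle x y w) (f : G →* H) (hf : Function.Injective f) :
    IsKleinFourCycle (f x) (f y) (f w) where
  x_ne_one := (map_ne_one_iff f hf).mpr h.x_ne_one
  y_ne_one := (map_ne_one_iff f hf).mpr h.y_ne_one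
  mul_ne_one := by rw [← map_mul]; exact (map_ne_one_iff f hf).mpr h.mul_ne_one
  x_mul_self := by rw [← map_mul, h.x_mul_self, map_one]
  y_mul_self := by rw [← map_mul, h.y_mul_self, map_one]
  mul_mul_self := by rw [← map_mul, ← map_mul, h.mul_mul_self, map_one]
  conj_x := by rw [← map_inv, ← map_mul, ← map_mul, h.conj_x]
  conj_y := by rw [← map_inv, ← map_mul, ← map_mul, h.conj_y, map_mul]

namespace alternatingGroup

open Equiv

section Embedding

variable {α β : Type*} [Fintype α] [DecidableEq α] [Fintype β] [DecidableEq β]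

noncomputable def viaEmbeddingHom (ι : α ↪ β) : alternatingGroup α →* alternatingGroup β :=
  ((Perm.viaEmbeddingHom ι).comp (alternatingGroup α).subtype).codRestrict _ fun σ => by
    classical
    simp only [MonoidHom.coe_comp, Subgroup.coe_subtype, Function.comp_apply,
      Perm.viaEmbeddingHom_apply, Perm.viaEmbedding, Perm.mem_alternatingGroup,
      Perm.sign_extendDomain]
    exact Perm.mem_alternatingGroup.mp σ.2

theorem viaEmbeddingHom_injective (ι : α ↪ β) : Function.Injective (viaEmbeddingHom ι) :=
  fun _ _ h => Subtype.ext (Perm.viaEmbeddingHom_injective ι (congrArg Subtype.val h))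

end Embedding

theorem exists_isKleinFourCycle_fin_four :
    ∃ x y w : alternatingGroup (Fin 4), IsKleinFourCycle x y w :=
  ⟨⟨swap 0 1 * swap 2 3, Perm.mem_alternatingGroup.mpr (by decide)⟩,
    ⟨swap 0 3 * swap 1 2, Perm.mem_alternatingGroup.mpr (by decide)⟩,
    ⟨swap 0 2 * swap 0 1, Perm.mem_alternatingGroup.mpr (by decide)⟩,
    by decide, by decide, by decide, by decide, by decide, by decide, by decide, by decide⟩

theorem exists_isKleinFourCycle_fin_five :
    ∃ x y w : alternatingGroup (Fin 5), IsKleinFourCycle x y w :=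
  let ⟨_, _, _, h⟩ := exists_isKleinFourCycle_fin_four
  ⟨_, _, _, h.map _ (viaEmbeddingHom_injective Fin.castSuccEmb)⟩

end alternatingGroup

theorem Equiv.Perm.exists_isKleinFourCycle_fin_four :
    ∃ x y w : Equiv.Perm (Fin 4), IsKleinFourCycle x y w :=
  let ⟨_, _, _, h⟩ := alternatingGroup.exists_isKleinFourCycle_fin_four
  ⟨_, _, _, h.map _ (alternatingGroup (Fin 4)).subtype_injective⟩

namespace QuaternionAlgebra

def mapRingHom {R S : Type*} [CommRing R] [CommRing S] (f : R →+* S) (a b : R) :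
    ℍ[R,a,b] →+* ℍ[S,f a,f b] where
  toFun q := ⟨f q.re, f q.imI, f q.imJ, f q.imK⟩
  map_one' := by ext <;> simp
  map_mul' x y := by ext <;> simp
  map_zero' := by ext <;> simp
  map_add' x y := by ext <;> simp

theorem im_mul_self {R : Type*} [CommRing R] {a b : R} (x : ℍ[R,a,b]) :
    (x * x).im = (2 * x.re) • x.im := by
  ext <;> simp <;> ring

variable {K : Type*} [Field K] [CharZero K] {a b : K}

theorem mem_center_units_iff (ha : a ≠ 0) (hb : b ≠ 0) {u : ℍ[K,a,b]ˣ} :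
    u ∈ Subgroup.center ℍ[K,a,b]ˣ ↔ (u : ℍ[K,a,b]).im = 0 := by
  rw [Subgroup.mem_center_iff]
  constructor
  · intro h
    have hi := congrArg Units.val <| h
      ⟨⟨0, 1, 0, 0⟩, ⟨0, a⁻¹, 0, 0⟩, by ext <;> simp [ha], by ext <;> simp [ha]⟩
    have hj := congrArg Units.val <| h
      ⟨⟨0, 0, 1, 0⟩, ⟨0, 0, b⁻¹, 0⟩, by ext <;> simp [hb], by ext <;> simp [hb]⟩
    simp only [Units.val_mul, QuaternionAlgebra.ext_iff, re_mul, imI_mul, imJ_mul, imK_mul,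
      zero_mul, mul_one, zero_add, mul_zero, add_zero, sub_zero, one_mul, zero_sub, sub_self,
      true_and, eq_neg_iff_add_eq_zero, neg_eq_iff_add_eq_zero, add_self_eq_zero, mul_eq_zero,
      ha, hb, false_or] at hi hj
    ext <;> simp [hi, hj]
  · intro h g
    rw [← Units.val_inj, Units.val_mul, Units.val_mul, ← re_add_im (u : ℍ[K,a,b]), h, add_zero,
      coe_commutes]

theorem exists_coe_eq_of_mem_center (ha : a ≠ 0) (hb : b ≠ 0) {u : ℍ[K,a,b]ˣ}
    (hu : u ∈ Subgroup.center ℍ[K,a,b]ˣ) : ∃ r : K, (u : ℍ[K,a,b]) = r :=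
  ⟨_, by rw [← re_add_im (u : ℍ[K,a,b]), (mem_center_units_iff ha hb).mp hu, add_zero]⟩

theorem re_eq_zero_of_im_mul_self_eq_zero {x : ℍ[K,a,b]} (hx : x.im ≠ 0)
    (hxx : (x * x).im = 0) : x.re = 0 := by
  rw [im_mul_self, smul_eq_zero] at hxx
  simpa [hx] using hxx

theorem mul_eq_neg_mul_of_re_eq_zero {x y : ℍ[K,a,b]} (hx : x.re = 0) (hy : y.re = 0)
    (hxy : (x * y).re = 0) : x * y = -(y * x) := by
  have h := star_mul x y
  rw [star_eq_neg.mpr hx, star_eq_neg.mpr hy, star_eq_neg.mpr hxy, neg_mul_neg] at h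
  rw [← h, neg_neg]

local notation "G" => ℍ[K,a,b]ˣ ⧸ Subgroup.center ℍ[K,a,b]ˣ

theorem re_eq_zero_of_mk_mul_self_eq_one (ha : a ≠ 0) (hb : b ≠ 0) {u : ℍ[K,a,b]ˣ}
    (hu : (u : G) ≠ 1) (hu2 : (u : G) * u = 1) : (u : ℍ[K,a,b]).re = 0 := by
  rw [Ne, QuotientGroup.eq_one_iff, mem_center_units_iff ha hb] at hu
  rw [← QuotientGroup.mk_mul, QuotientGroup.eq_one_iff, mem_center_units_iff ha hb,
    Units.val_mul] at hu2
  exact re_eq_zero_of_im_mul_self_eq_zero hu hu2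

theorem exists_mul_self_eq_of_mk_conj (ha : a ≠ 0) (hb : b ≠ 0) {u v w : ℍ[K,a,b]ˣ}
    (hu2 : (u : G) * u = 1) (h : (w : G) * u * (w : G)⁻¹ = v) :
    ∃ μ : K, (u * u : ℍ[K,a,b]) = ↑(μ ^ 2) * (v * v) := by
  rw [← QuotientGroup.mk_mul, QuotientGroup.eq_one_iff] at hu2
  rw [← QuotientGroup.mk_inv, ← QuotientGroup.mk_mul, ← QuotientGroup.mk_mul,
    QuotientGroup.eq_iff_div_mem] at h
  obtain ⟨μ, hμ⟩ := exists_coe_eq_of_mem_center ha hb h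
  refine ⟨μ, ?_⟩
  have := congrArg Units.val
    (mul_self_eq_of_conj_eq_central_mul hu2 h (div_mul_cancel _ v).symm)
  simp only [Units.val_mul, hμ] at this
  rw [this, sq, coe_mul]

theorem exists_isHamiltonPair_of_isKleinFourCycle (ha : a ≠ 0) (hb : b ≠ 0) {x y w : G}
    (h : IsKleinFourCycle x y w) : ∃ P Q : ℍ[K,a,b], IsHamiltonPair P Q := by
  obtain ⟨u, rfl⟩ := QuotientGroup.mk_surjective x
  obtain ⟨v, rfl⟩ := QuotientGroup.mk_surjective y
  obtain ⟨w, rfl⟩ := QuotientGroup.mk_surjective w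
  have hanti : (u * v : ℍ[K,a,b]) = -(v * u) :=
    mul_eq_neg_mul_of_re_eq_zero (re_eq_zero_of_mk_mul_self_eq_one ha hb h.x_ne_one h.x_mul_self)
      (re_eq_zero_of_mk_mul_self_eq_one ha hb h.y_ne_one h.y_mul_self)
      (re_eq_zero_of_mk_mul_self_eq_one (u := u * v) ha hb h.mul_ne_one h.mul_mul_self)
  obtain ⟨α, hα⟩ := exists_coe_eq_of_mem_center ha hb
    ((QuotientGroup.eq_one_iff (u * u)).mp h.x_mul_self)
  obtain ⟨β, hβ⟩ := exists_coe_eq_of_mem_center ha hb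
    ((QuotientGroup.eq_one_iff (v * v)).mp h.y_mul_self)
  obtain ⟨μ, hμ⟩ := exists_mul_self_eq_of_mk_conj ha hb h.x_mul_self h.conj_x
  obtain ⟨ν, hν⟩ := exists_mul_self_eq_of_mk_conj ha hb h.y_mul_self h.conj_y
  rw [Units.val_mul] at hα hβ
  have hβ0 : β ≠ 0 := by
    rintro rfl
    exact (v * v).ne_zero (by rw [Units.val_mul, hβ, coe_zero])
  have huv : (↑(u * v) * ↑(u * v) : ℍ[K,a,b]) = ↑(-(α * β)) := by
    rw [Units.val_mul, coe_neg, coe_mul, ← hα, ← hβ]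
    calc (u * v * (u * v) : ℍ[K,a,b]) = u * (v * u) * v := by noncomm_ring
      _ = -(u * u * (v * v)) := by rw [← neg_neg ((v : ℍ[K,a,b]) * u), ← hanti]; noncomm_ring
  have e1 : α = μ ^ 2 * β := coe_injective (by rw [← hα, hμ, hβ, coe_mul])
  have e2 : β = ν ^ 2 * -(α * β) := coe_injective (by rw [← hβ, hν, huv, coe_mul])
  have hνα : ν ^ 2 * α = -1 := mul_left_cancel₀ hβ0 (by linear_combination e2)
  refine ⟨ν • u, (μ * ν) • v, isHamiltonPair_smul ?_ ?_ hanti⟩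
  · rw [hα, smul_coe, hνα, coe_neg, coe_one]
  · rw [hβ, smul_coe, show (μ * ν) ^ 2 * β = -1 by linear_combination hνα - ν ^ 2 * e1, coe_neg,
      coe_one]

theorem not_isKleinFourCycle_of_indefinite {a b : ℚ} (ha : a ≠ 0) (hb : b ≠ 0)
    (e : ℍ[ℝ, (a : ℝ), (b : ℝ)] ≃ₐ[ℝ] Matrix (Fin 2) (Fin 2) ℝ)
    {x y w : ℍ[ℚ,a,b]ˣ ⧸ Subgroup.center ℍ[ℚ,a,b]ˣ} : ¬IsKleinFourCycle x y w := fun h =>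
  let ⟨_, _, hPQ⟩ := exists_isHamiltonPair_of_isKleinFourCycle ha hb h
  Matrix.not_isHamiltonPair _ _ ((hPQ.map (mapRingHom (Rat.castHom ℝ) a b)).map
    (e : ℍ[ℝ, (a : ℝ), (b : ℝ)] →+* Matrix (Fin 2) (Fin 2) ℝ))

end QuaternionAlgebra

/-- For an indefinite quaternion algebra `B` over ℚ, the group `B*/ℚ*` contains no subgroup
isomorphic to `A₄`, `S₄` or `A₅`. -/
theorem indefinite_no_exceptional_subgroups (a b : ℚ) (ha : a ≠ 0) (hb : b ≠ 0)
    (hindef : Nonempty (ℍ[ℝ, (a : ℝ), (b : ℝ)] ≃ₐ[ℝ] Matrix (Fin 2) (Fin 2) ℝ)) :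
    ∀ H : Subgroup (ℍ[ℚ, a, b]ˣ ⧸ Subgroup.center ℍ[ℚ, a, b]ˣ),
      IsEmpty (H ≃* alternatingGroup (Fin 4)) ∧
      IsEmpty (H ≃* Equiv.Perm (Fin 4)) ∧
      IsEmpty (H ≃* alternatingGroup (Fin 5)) := by
  obtain ⟨e⟩ := hindef
  intro H
  have isEmpty_equiv : ∀ {Γ : Type} [Group Γ], (∃ x y w : Γ, IsKleinFourCycle x y w) →
      IsEmpty (H ≃* Γ) := by
    rintro Γ _ ⟨_, _, _, h⟩
    exact ⟨fun φ => QuaternionAlgebra.not_isKleinFourCycle_of_indefinite ha hb e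
      (h.map (H.subtype.comp φ.symm.toMonoidHom) (H.subtype_injective.comp φ.symm.injective))⟩
  exact ⟨isEmpty_equiv alternatingGroup.exists_isKleinFourCycle_fin_four,
    isEmpty_equiv Equiv.Perm.exists_isKleinFourCycle_fin_four,
    isEmpty_equiv alternatingGroup.exists_isKleinFourCycle_fin_five⟩
end

section
/- Let B be a quaternion algebra over ℚ and let f: B₀ → B₀ be a ℚ-linear isometry of the reduced norm form (n(f(μ)) = n(μ) for all pure quaternions μ). Then there exist ε ∈ {±1} and γ ∈ B* such that f(μ) = ε·γ⁻¹μγ for all μ ∈ B₀. -/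
open scoped Quaternion

namespace IsomAux

open QuaternionAlgebra

variable (a b : ℚ)

def qi : ℍ[ℚ, a, b] := ⟨0, 1, 0, 0⟩
def qj : ℍ[ℚ, a, b] := ⟨0, 0, 1, 0⟩
def qk : ℍ[ℚ, a, b] := ⟨0, 0, 0, 1⟩

/-- reduced norm -/
def nq (x : ℍ[ℚ, a, b]) : ℚ :=
  x.re * x.re - a * (x.imI * x.imI) - b * (x.imJ * x.imJ) + a * b * (x.imK * x.imK)

variable {a b}

lemma mul_star_self (x : ℍ[ℚ, a, b]) : x * star x = (nq a b x : ℍ[ℚ, a, b]) := by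
  ext <;> simp [nq] <;> ring

lemma star_mul_self (x : ℍ[ℚ, a, b]) : star x * x = (nq a b x : ℍ[ℚ, a, b]) := by
  ext <;> simp [nq] <;> ring

/-- invertible quaternions from nonvanishing norm -/
def mkUnit (x : ℍ[ℚ, a, b]) (h : nq a b x ≠ 0) : ℍ[ℚ, a, b]ˣ where
  val := x
  inv := (nq a b x)⁻¹ • star x
  val_inv := by
    rw [mul_smul_comm, mul_star_self, smul_coe, inv_mul_cancel₀ h, coe_one]
  inv_val := by
    rw [smul_mul_assoc, star_mul_self, smul_coe, inv_mul_cancel₀ h, coe_one]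

@[simp] lemma mkUnit_val (x : ℍ[ℚ, a, b]) (h : nq a b x ≠ 0) : (mkUnit x h : ℍ[ℚ, a, b]) = x := rfl

lemma pure_iff {x : ℍ[ℚ, a, b]} : x + star x = 0 ↔ x.re = 0 := by
  constructor
  · intro h
    have := congrArg QuaternionAlgebra.re h
    simp at this
    linarith
  · intro h
    have : star x = -x := star_eq_neg.2 h
    rw [this, add_neg_cancel]

lemma star_pure {x : ℍ[ℚ, a, b]} (h : x.re = 0) : star x = -x := star_eq_neg.2 h

lemma ii : qi a b * qi a b = (a : ℍ[ℚ, a, b]) := by ext <;> simp [qi]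
lemma jj : qj a b * qj a b = (b : ℍ[ℚ, a, b]) := by ext <;> simp [qj]
lemma kk : qk a b * qk a b = (((-(a * b)) : ℚ) : ℍ[ℚ, a, b]) := by ext <;> simp [qk]
lemma ij : qi a b * qj a b = qk a b := by ext <;> simp [qi, qj, qk]
lemma ik : qi a b * qk a b = (a : ℍ[ℚ, a, b]) * qj a b := by ext <;> simp [qi, qj, qk]
lemma ij_anti : qi a b * qj a b + qj a b * qi a b = 0 := by ext <;> simp [qi, qj]
lemma ik_anti : qi a b * qk a b + qk a b * qi a b = 0 := by ext <;> simp [qi, qk]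
lemma jk_anti : qj a b * qk a b + qk a b * qj a b = 0 := by ext <;> simp [qj, qk]

@[simp] lemma re_i : (qi a b).re = 0 := rfl
@[simp] lemma imI_i : (qi a b).imI = 1 := rfl
@[simp] lemma imJ_i : (qi a b).imJ = 0 := rfl
@[simp] lemma imK_i : (qi a b).imK = 0 := rfl
@[simp] lemma re_j : (qj a b).re = 0 := rfl
@[simp] lemma imI_j : (qj a b).imI = 0 := rfl
@[simp] lemma imJ_j : (qj a b).imJ = 1 := rfl
@[simp] lemma imK_j : (qj a b).imK = 0 := rfl
@[simp] lemma re_k : (qk a b).re = 0 := rfl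
@[simp] lemma imI_k : (qk a b).imI = 0 := rfl
@[simp] lemma imJ_k : (qk a b).imJ = 0 := rfl
@[simp] lemma imK_k : (qk a b).imK = 1 := rfl

lemma anticommute_i (ha : a ≠ 0) {x : ℍ[ℚ, a, b]} (h : qi a b * x + x * qi a b = 0) :
    x.re = 0 ∧ x.imI = 0 := by
  have h1 := congrArg QuaternionAlgebra.re h
  have h2 := congrArg QuaternionAlgebra.imI h
  simp only [re_add, re_mul, imI_add, imI_mul, re_zero, imI_zero, qi] at h1 h2
  norm_num at h1 h2
  constructor
  · linarith
  · rcases h1 with h1 | h1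
    · exact absurd h1 ha
    · exact h1

lemma pure_decomp {x : ℍ[ℚ, a, b]} (h : x.re = 0) :
    x = x.imI • qi a b + x.imJ • qj a b + x.imK • qk a b := by
  ext <;> simp [qi, qj, qk, h]


lemma nq_step1_good {U : ℍ[ℚ, a, b]} (hU : U.re = 0) (hUre : (U * U).re = a) :
    nq a b (qi a b + U) = -2 * a * (1 + U.imI) := by
  simp only [re_mul, hU, zero_mul, mul_zero, zero_add, add_zero, zero_sub, sub_zero] at hUre
  simp only [nq, qi, re_add, imI_add, imJ_add, imK_add, hU, zero_add, add_zero]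
  linarith [hUre]

lemma nq_step1_bad {U : ℍ[ℚ, a, b]} (hU : U.re = 0) (h1 : U.imI = -1)
    (hUre : (U * U).re = a) : nq a b (qk a b + qj a b * U) = 4 * (a * b) := by
  simp only [re_mul, hU, h1, zero_mul, mul_zero, zero_add, add_zero, zero_sub, sub_zero] at hUre
  simp only [nq, qk, qj, re_add, imI_add, imJ_add, imK_add, re_mul, imI_mul, imJ_mul, imK_mul,
    hU, h1]
  ring_nf
  ring_nf at hUre
  linear_combination b * hUre

lemma rel1_good {U : ℍ[ℚ, a, b]} (hUU : U * U = (a : ℍ[ℚ, a, b])) :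
    qi a b * (qi a b + U) = (qi a b + U) * U := by
  rw [mul_add, add_mul, ii, hUU]
  exact add_comm _ _

lemma rel1_bad {U : ℍ[ℚ, a, b]} (hUU : U * U = (a : ℍ[ℚ, a, b])) :
    qi a b * (qk a b + qj a b * U) = (qk a b + qj a b * U) * U := by
  rw [mul_add, add_mul, ik, ← mul_assoc, ij, mul_assoc, hUU, mul_coe_eq_smul, coe_mul_eq_smul]
  exact add_comm _ _

lemma c_d_rel (hb : b ≠ 0) {v₂ : ℍ[ℚ, a, b]} (h0 : v₂.re = 0) (h1 : v₂.imI = 0)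
    (h2 : (v₂ * v₂).re = b) : v₂.imJ * v₂.imJ - a * (v₂.imK * v₂.imK) = 1 := by
  simp only [re_mul, h0, h1, zero_mul, mul_zero, zero_add, add_zero, zero_sub, sub_zero] at h2
  have hkey : b * (v₂.imJ * v₂.imJ - a * (v₂.imK * v₂.imK)) = b * 1 := by linear_combination h2
  exact mul_left_cancel₀ hb hkey

lemma v2_decomp {v₂ : ℍ[ℚ, a, b]} (h0 : v₂.re = 0) (h1 : v₂.imI = 0) :
    v₂ = v₂.imJ • qj a b + v₂.imK • qk a b := by
  ext <;> simp [qj, qk, h0, h1]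

lemma rel2 {c d : ℚ} (h : c * c - a * (d * d) = 1) :
    qj a b * (((1 + c : ℚ) : ℍ[ℚ, a, b]) - d • qi a b) =
      (((1 + c : ℚ) : ℍ[ℚ, a, b]) - d • qi a b) * (c • qj a b + d • qk a b) := by
  ext
  · simp
  · simp
  · simp; linear_combination -h
  · simp; ring

lemma nq_gamma2 {c d : ℚ} (h : c * c - a * (d * d) = 1) :
    nq a b (((1 + c : ℚ) : ℍ[ℚ, a, b]) - d • qi a b) = 2 * (1 + c) := by
  simp [nq]
  linear_combination h

lemma commute_gamma2 {c d : ℚ} :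
    qi a b * (((1 + c : ℚ) : ℍ[ℚ, a, b]) - d • qi a b) =
      (((1 + c : ℚ) : ℍ[ℚ, a, b]) - d • qi a b) * qi a b := by
  ext <;> simp <;> ring

lemma rel2_bad : qj a b * qi a b = qi a b * (-(1 : ℚ) • qj a b + (0 : ℚ) • qk a b) := by
  ext <;> simp [qi, qj, qk]

lemma nq_i : nq a b (qi a b) = -a := by simp [nq, qi]

end IsomAux

open IsomAux QuaternionAlgebra

/-- Every ℚ-linear isometry of the space `B₀` of pure quaternions (for the reduced norm form)
is of the form `μ ↦ ε γ⁻¹ μ γ` with `ε = ±1` and `γ ∈ B*`. -/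
theorem isometry_of_pure_quaternions (a b : ℚ) (ha : a ≠ 0) (hb : b ≠ 0)
    (f : ℍ[ℚ, a, b] →ₗ[ℚ] ℍ[ℚ, a, b])
    (hmaps : ∀ μ : ℍ[ℚ, a, b], μ + star μ = 0 → f μ + star (f μ) = 0)
    (hisom : ∀ μ : ℍ[ℚ, a, b], μ + star μ = 0 → f μ * star (f μ) = μ * star μ) :
    ∃ ε : ℚ, (ε = 1 ∨ ε = -1) ∧ ∃ γ : ℍ[ℚ, a, b]ˣ,
      ∀ μ : ℍ[ℚ, a, b], μ + star μ = 0 →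
        f μ = ε • ((↑γ⁻¹ : ℍ[ℚ, a, b]) * μ * (γ : ℍ[ℚ, a, b])) := by
  classical
  -- squares are preserved
  have sq : ∀ x : ℍ[ℚ, a, b], x.re = 0 → f x * f x = x * x := by
    intro x hx
    have h1 := hisom x (pure_iff.2 hx)
    have hs : star (f x) = -f x := star_pure (pure_iff.1 (hmaps x (pure_iff.2 hx)))
    rw [hs, star_pure hx, mul_neg, mul_neg, neg_inj] at h1
    exact h1
  -- polarization
  have pol : ∀ x y : ℍ[ℚ, a, b], x.re = 0 → y.re = 0 →
      f x * f y + f y * f x = x * y + y * x := by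
    intro x y hx hy
    have hxy : (x + y).re = 0 := by rw [re_add, hx, hy, add_zero]
    have h3 := sq (x + y) hxy
    rw [map_add] at h3
    have e1 : f x * f y + f y * f x
        = (f x + f y) * (f x + f y) - f x * f x - f y * f y := by noncomm_ring
    rw [e1, h3, sq x hx, sq y hy]
    noncomm_ring
  set u := f (qi a b) with hu
  set v := f (qj a b) with hv
  set w := f (qk a b) with hw
  have hure : u.re = 0 := pure_iff.1 (hmaps _ (pure_iff.2 re_i))
  have hvre : v.re = 0 := pure_iff.1 (hmaps _ (pure_iff.2 re_j))
  have hwre : w.re = 0 := pure_iff.1 (hmaps _ (pure_iff.2 re_k))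
  have hu2 : u * u = (a : ℍ[ℚ, a, b]) := by
    have := sq (qi a b) re_i; rwa [ii] at this
  have hv2 : v * v = (b : ℍ[ℚ, a, b]) := by
    have := sq (qj a b) re_j; rwa [jj] at this
  have hw2 : w * w = (((-(a * b)) : ℚ) : ℍ[ℚ, a, b]) := by
    have := sq (qk a b) re_k; rwa [kk] at this
  have huv : u * v + v * u = 0 := by
    have := pol _ _ re_i re_j; rwa [ij_anti] at this
  have huw : u * w + w * u = 0 := by
    have := pol _ _ re_i re_k; rwa [ik_anti] at this
  have hvw : v * w + w * v = 0 := by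
    have := pol _ _ re_j re_k; rwa [jk_anti] at this
  have hvu : v * u = -(u * v) := eq_neg_of_add_eq_zero_right huv
  have hvw' : v * w = -(w * v) := eq_neg_of_add_eq_zero_left hvw
  have huw' : u * w = -(w * u) := eq_neg_of_add_eq_zero_left huw
  -- w ⬝ (u v) commutes with everything
  have huvw : (u * v) * w = w * (u * v) := by
    calc (u * v) * w = u * (v * w) := by rw [mul_assoc]
      _ = -((u * w) * v) := by rw [hvw', mul_neg, mul_assoc]
      _ = (w * u) * v := by rw [huw', neg_mul, neg_neg]
      _ = w * (u * v) := by rw [mul_assoc]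
  have hsu : star u = -u := star_pure hure
  have hsv : star v = -v := star_pure hvre
  have hsw : star w = -w := star_pure hwre
  have hst : star (w * (u * v)) = w * (u * v) := by
    rw [star_mul, star_mul, hsu, hsv, hsw, neg_mul_neg, mul_neg, hvu, neg_mul, neg_neg, huvw]
  have htc : w * (u * v) = (((w * (u * v)).re : ℚ) : ℍ[ℚ, a, b]) := star_eq_self.1 hst
  set r : ℚ := (w * (u * v)).re with hr
  have huv2 : (u * v) * (u * v) = (((-(a * b)) : ℚ) : ℍ[ℚ, a, b]) := by
    have h1 : (u * v) * (u * v) = u * (v * u) * v := by noncomm_ring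
    rw [h1, hvu]
    have h2 : u * -(u * v) * v = -((u * u) * (v * v)) := by noncomm_ring
    rw [h2, hu2, hv2, ← coe_mul, ← coe_neg]
  have hab : (-(a * b)) ≠ 0 := by
    simp only [ne_eq, neg_eq_zero, mul_eq_zero, not_or]; exact ⟨ha, hb⟩
  have key : (-(a * b)) • w = r • (u * v) := by
    have h1 := congrArg (fun x => x * (u * v)) htc
    rw [mul_assoc, huv2, mul_coe_eq_smul, coe_mul_eq_smul] at h1
    exact h1
  set ε : ℚ := (-(a * b))⁻¹ * r with hε
  have hwδ : w = ε • (u * v) := by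
    have h1 := congrArg (fun x => (-(a * b))⁻¹ • x) key
    simp only [smul_smul, inv_mul_cancel₀ hab, one_smul] at h1
    exact h1
  have hε2 : ε * ε = 1 := by
    have h1 : w * w = (ε * ε) • ((u * v) * (u * v)) := by
      rw [hwδ, smul_mul_smul_comm]
    rw [hw2, huv2, smul_coe] at h1
    have h2 := coe_injective h1
    have h3 : (1 : ℚ) * (-(a * b)) = (ε * ε) * (-(a * b)) := by linear_combination h2
    exact (mul_right_cancel₀ hab h3.symm)
  have hεcases : ε = 1 ∨ ε = -1 := mul_self_eq_one_iff.mp hε2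
  -- scaled images
  obtain ⟨U, hU⟩ : ∃ U, U = ε • u := ⟨_, rfl⟩
  obtain ⟨V, hV⟩ : ∃ V, V = ε • v := ⟨_, rfl⟩
  have hUre : U.re = 0 := by rw [hU, re_smul, hure, smul_zero]
  have hUU : U * U = (a : ℍ[ℚ, a, b]) := by
    rw [hU, smul_mul_smul_comm, hε2, one_smul, hu2]
  have hVV : V * V = (b : ℍ[ℚ, a, b]) := by
    rw [hV, smul_mul_smul_comm, hε2, one_smul, hv2]
  have hUVanti : U * V + V * U = 0 := by
    rw [hU, hV, smul_mul_smul_comm, smul_mul_smul_comm, ← smul_add, huv, smul_zero]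
  have hUV : U * V = u * v := by rw [hU, hV, smul_mul_smul_comm, hε2, one_smul]
  have hwUV : w = ε • (U * V) := by rw [hUV, hwδ]
  -- step 1 : a unit intertwining qi with U
  have hUUre : (U * U).re = a := by rw [hUU, re_coe]
  obtain ⟨g1, rel1⟩ : ∃ g : ℍ[ℚ, a, b]ˣ, qi a b * ↑g = ↑g * U := by
    by_cases hc : U.imI = -1
    · refine ⟨mkUnit (qk a b + qj a b * U) ?_, ?_⟩
      · rw [nq_step1_bad hUre hc hUUre]
        simp only [ne_eq, mul_eq_zero, not_or]
        refine ⟨?_, ha, hb⟩; norm_num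
      · rw [mkUnit_val]; exact rel1_bad hUU
    · refine ⟨mkUnit (qi a b + U) ?_, ?_⟩
      · rw [nq_step1_good hUre hUUre]
        have h1 : 1 + U.imI ≠ 0 := fun h => hc (by linarith)
        simp only [ne_eq, mul_eq_zero, not_or]
        refine ⟨⟨?_, ha⟩, h1⟩; norm_num
      · rw [mkUnit_val]; exact rel1_good hUU
  have rel1' : (↑g1⁻¹ : ℍ[ℚ, a, b]) * qi a b = U * ↑g1⁻¹ := by
    have h1 := congrArg (fun x => (↑g1⁻¹ : ℍ[ℚ, a, b]) * x * (↑g1⁻¹ : ℍ[ℚ, a, b])) rel1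
    simpa [mul_assoc] using h1
  -- step 2 : conjugate V back and match with qj
  obtain ⟨v₂, hv₂⟩ : ∃ x, x = (↑g1 : ℍ[ℚ, a, b]) * V * ↑g1⁻¹ := ⟨_, rfl⟩
  have hanti2 : qi a b * v₂ + v₂ * qi a b = 0 := by
    have h1 : qi a b * v₂ = ↑g1 * ((U * V) * ↑g1⁻¹) := by
      rw [hv₂, ← mul_assoc, ← mul_assoc, rel1]; simp [mul_assoc]
    have h2 : v₂ * qi a b = ↑g1 * ((V * U) * ↑g1⁻¹) := by
      rw [hv₂, mul_assoc, mul_assoc, rel1']; simp [mul_assoc]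
    rw [h1, h2, ← mul_add, ← add_mul, hUVanti, zero_mul, mul_zero]
  have hv₂sq : v₂ * v₂ = (b : ℍ[ℚ, a, b]) := by
    rw [hv₂]
    have h1 : ((↑g1 : ℍ[ℚ, a, b]) * V * ↑g1⁻¹) * (↑g1 * V * ↑g1⁻¹)
        = ↑g1 * (V * V) * ↑g1⁻¹ := by
      simp [mul_assoc]
    rw [h1, hVV, ← coe_commutes, mul_assoc, Units.mul_inv, mul_one]
  obtain ⟨h20, h21⟩ := anticommute_i ha hanti2
  have hcd : v₂.imJ * v₂.imJ - a * (v₂.imK * v₂.imK) = 1 :=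
    c_d_rel hb h20 h21 (by rw [hv₂sq, re_coe])
  obtain ⟨g2, rel2j, rel2i⟩ : ∃ g : ℍ[ℚ, a, b]ˣ,
      qj a b * ↑g = ↑g * v₂ ∧ qi a b * ↑g = ↑g * qi a b := by
    by_cases hc : v₂.imJ = -1
    · have hd2 : a * (v₂.imK * v₂.imK) = 0 := by rw [hc] at hcd; linarith
      have hd : v₂.imK = 0 := by
        rcases mul_eq_zero.mp hd2 with h | h
        · exact absurd h ha
        · rcases mul_eq_zero.mp h with h' | h' <;> exact h'
      refine ⟨mkUnit (qi a b) (by rw [nq_i]; simpa using ha), ?_, ?_⟩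
      · rw [mkUnit_val, v2_decomp h20 h21, hc, hd]
        convert rel2_bad using 3 <;> norm_num
      · rw [mkUnit_val]
    · obtain ⟨c, hcdef⟩ : ∃ c, c = v₂.imJ := ⟨_, rfl⟩
      obtain ⟨d, hddef⟩ : ∃ d, d = v₂.imK := ⟨_, rfl⟩
      have hveq : v₂ = c • qj a b + d • qk a b := by
        rw [hcdef, hddef]; exact v2_decomp h20 h21
      have hcd' : c * c - a * (d * d) = 1 := by rw [hcdef, hddef]; exact hcd
      refine ⟨mkUnit (((1 + c : ℚ) : ℍ[ℚ, a, b]) - d • qi a b) ?_, ?_, ?_⟩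
      · rw [nq_gamma2 hcd']
        have h1 : 1 + c ≠ 0 := by
          intro h
          exact hc (by rw [← hcdef]; linarith)
        simp only [ne_eq, mul_eq_zero, not_or]
        exact ⟨by norm_num, h1⟩
      · rw [mkUnit_val, hveq]
        exact rel2 hcd'
      · rw [mkUnit_val]; exact commute_gamma2
  -- the unit
  refine ⟨ε, hεcases, g2 * g1, ?_⟩
  have reli : qi a b * ↑(g2 * g1) = ↑(g2 * g1) * U := by
    rw [Units.val_mul, ← mul_assoc, rel2i, mul_assoc, rel1, ← mul_assoc]
  have relj : qj a b * ↑(g2 * g1) = ↑(g2 * g1) * V := by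
    rw [Units.val_mul, ← mul_assoc, rel2j, mul_assoc]
    have h1 : v₂ * ↑g1 = ↑g1 * V := by
      rw [hv₂, mul_assoc, Units.inv_mul, mul_one]
    rw [h1, ← mul_assoc]
  have relk : qk a b * ↑(g2 * g1) = ↑(g2 * g1) * (U * V) := by
    rw [← ij, mul_assoc, relj, ← mul_assoc, reli, mul_assoc]
  have conji : (↑(g2 * g1)⁻¹ : ℍ[ℚ, a, b]) * qi a b * ↑(g2 * g1) = U := by
    rw [mul_assoc, reli, Units.inv_mul_cancel_left]
  have conjj : (↑(g2 * g1)⁻¹ : ℍ[ℚ, a, b]) * qj a b * ↑(g2 * g1) = V := by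
    rw [mul_assoc, relj, Units.inv_mul_cancel_left]
  have conjk : (↑(g2 * g1)⁻¹ : ℍ[ℚ, a, b]) * qk a b * ↑(g2 * g1) = U * V := by
    rw [mul_assoc, relk, Units.inv_mul_cancel_left]
  intro μ hμ
  have hμre : μ.re = 0 := pure_iff.1 hμ
  obtain ⟨x, y, z, hxyz⟩ : ∃ x y z : ℚ, μ = x • qi a b + y • qj a b + z • qk a b :=
    ⟨μ.imI, μ.imJ, μ.imK, pure_decomp hμre⟩
  subst hxyz
  rw [map_add, map_add, map_smul, map_smul, map_smul, ← hu, ← hv, ← hw]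
  rw [mul_add, mul_add, add_mul, add_mul]
  rw [mul_smul_comm, mul_smul_comm, mul_smul_comm,
    smul_mul_assoc, smul_mul_assoc, smul_mul_assoc]
  rw [conji, conjj, conjk]
  rw [hwUV, hU, hV]
  match_scalars
  · linear_combination (-x) * hε2
  · linear_combination (-y) * hε2
  · ring
end
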